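/- arXiv:2004.05058 — 4 statements merged into one kernel-verified Lean document; each statement's English description precedes it below -/
import Mathlib

section
/- Let G be a countably infinite cancellative semigroup and let (F_n) be a Følner sequence in G such that for every α ∈ (0,1) one has ∑_{n=1}^∞ α^{|F_n|} < ∞. Then λ-almost every x ∈ {0,1}^G is (F_n)-normal, i.e., for λ-almost every x, for every nonempty finite set K ⊆ G and every block B : K → {0,1}, (1/|F_n|)·|{g ∈ F_n : ∀ h ∈ K, x(h·g) = B(h)}| → 2^{−|K|} as n → ∞. -/
open Filter MeasureTheory

/- `g⁻¹ F` is encoded as `{h : g * h ∈ F}`. -/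
open scoped Classical in
def IsFolner {G : Type*} [Mul G] (F : ℕ → Finset G) : Prop :=
  (∀ n, (F n).Nonempty) ∧
  ∀ g : G, Tendsto
    (fun n => (((F n).filter (fun h => g * h ∈ F n)).card : ℝ) / (F n).card)
    atTop (nhds 1)

/- A block `B : K → {0,1}` is encoded as a total function `G → Bool`; only its values on `K`
matter. -/
def IsNormalFun {G : Type*} [Mul G] (F : ℕ → Finset G) (x : G → Bool) : Prop :=
  ∀ K : Finset G, K.Nonempty → ∀ B : G → Bool,
    Tendsto
      (fun n => (((F n).filter (fun g => ∀ h ∈ K, x (h * g) = B h)).card : ℝ) / (F n).card)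
      atTop (nhds ((1 / 2 : ℝ) ^ K.card))

/-!
Fix `K` and `B`. The events "`x` shows `B` on `K * g`", for `g` ranging over a set whose
`K`-translates are pairwise disjoint, are independent of probability `2^{-|K|}`, so Hoeffding's
inequality controls the block count over such a set. By cancellativity a translate `K * g` meets
at most `|K|²` others, so a greedy colouring splits every window `F n` into `|K|² + 1` such sets.
A deviation `ε |F n|` of the block count forces a deviation `ε |F n| / (|K|² + 1)` on one colour
class, which has probability at most `C α^{|F n|}` for some `α < 1`; the summability hypothesis and
Borel–Cantelli finish the argument. Only countably many pairs `(K, B|_K)` occur.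
-/

open ProbabilityTheory Finset
open scoped NNReal Topology

theorem Finset.exists_coloring_of_card_filter_le {α : Type*} [DecidableEq α] (R : α → α → Prop)
    [DecidableRel R] (hR : ∀ a b, R a b → R b a) (s : Finset α) {d : ℕ}
    (hd : ∀ a ∈ s, #{b ∈ s | R a b} ≤ d) :
    ∃ c : α → Fin (d + 1), ∀ a ∈ s, ∀ b ∈ s, a ≠ b → R a b → c a ≠ c b := by
  induction s using Finset.induction_on with
  | empty => exact ⟨fun _ => 0, by simp⟩
  | insert a s ha ih =>
    have hsub : ∀ b, #{b' ∈ s | R b b'} ≤ #{b' ∈ insert a s | R b b'} := fun b =>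
      card_le_card (filter_subset_filter _ (subset_insert a s))
    obtain ⟨c, hc⟩ := ih fun b hb => (hsub b).trans (hd b (mem_insert_of_mem hb))
    obtain ⟨i, hi⟩ : ∃ i, i ∉ image c {b ∈ s | R a b} := by
      by_contra! h
      have : #(univ : Finset (Fin (d + 1))) ≤ d := (card_le_card fun j _ => h j).trans
        (card_image_le.trans ((hsub a).trans (hd a (mem_insert_self a s))))
      simp at this
    have hfree : ∀ b ∈ s, R a b → i ≠ c b := fun b hb hab h =>
      hi (mem_image.2 ⟨b, mem_filter.2 ⟨hb, hab⟩, h.symm⟩)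
    have hold : ∀ b ∈ s, Function.update c a i b = c b := fun b hb =>
      Function.update_of_ne (ne_of_mem_of_not_mem hb ha) _ _
    refine ⟨Function.update c a i, fun b hb b' hb' hne hbb' => ?_⟩
    rcases mem_insert.1 hb with rfl | hbs <;> rcases mem_insert.1 hb' with rfl | hb's
    · exact absurd rfl hne
    · rw [Function.update_self, hold b' hb's]; exact hfree b' hb's hbb'
    · rw [Function.update_self, hold b hbs]; exact (hfree b hbs (hR _ _ hbb')).symm
    · rw [hold b hbs, hold b' hb's]; exact hc b hbs b' hb's hne hbb'

theorem ProbabilityTheory.HasSubgaussianMGF.mono {Ω : Type*} [MeasurableSpace Ω]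
    {μ : Measure Ω} {X : Ω → ℝ} {c c' : ℝ≥0} (h : HasSubgaussianMGF X c μ) (hc : c ≤ c') :
    HasSubgaussianMGF X c' μ :=
  ⟨h.integrable_exp_mul, fun t => (h.mgf_le t).trans (Real.exp_le_exp.2 (by gcongr))⟩

theorem ProbabilityTheory.HasSubgaussianMGF.measureReal_abs_ge_le {Ω : Type*}
    [MeasurableSpace Ω] {μ : Measure Ω} {X : Ω → ℝ} {c : ℝ≥0} (h : HasSubgaussianMGF X c μ)
    {ε : ℝ} (hε : 0 ≤ ε) :
    μ.real {ω | ε ≤ |X ω|} ≤ 2 * Real.exp (-ε ^ 2 / (2 * c)) := by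
  have hsplit : {ω | ε ≤ |X ω|} = {ω | ε ≤ X ω} ∪ {ω | ε ≤ (-X) ω} := by
    ext ω; simp [le_abs]
  rw [hsplit]
  calc _ ≤ μ.real {ω | ε ≤ X ω} + μ.real {ω | ε ≤ (-X) ω} := measureReal_union_le _ _
    _ ≤ _ := by linarith [h.measure_ge_le hε, h.neg.measure_ge_le hε]

theorem MeasureTheory.ae_eventually_notMem_of_measureReal_le {α : Type*} [MeasurableSpace α]
    {μ : Measure α} [IsFiniteMeasure μ] {s : ℕ → Set α} {f : ℕ → ℝ} (hf : Summable f)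
    (hs : ∀ n, μ.real (s n) ≤ f n) : ∀ᵐ x ∂μ, ∀ᶠ n in atTop, x ∉ s n := by
  refine ae_eventually_notMem (ne_top_of_le_ne_top (ENNReal.ofReal_ne_top (r := ∑' n, f n)) ?_)
  rw [ENNReal.ofReal_tsum_of_nonneg (fun n => measureReal_nonneg.trans (hs n)) hf]
  exact ENNReal.tsum_le_tsum fun n =>
    ofReal_measureReal (μ := μ) (s := s n) ▸ ENNReal.ofReal_le_ofReal (hs n)

theorem tendsto_div_of_forall_eventually_abs_sub_mul_lt {a N : ℕ → ℝ} {m : ℝ}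
    (h : ∀ k : ℕ, ∀ᶠ n in atTop, |a n - m * N n| < N n / (k + 1)) :
    Tendsto (fun n => a n / N n) atTop (𝓝 m) := by
  refine Metric.tendsto_nhds.2 fun δ hδ => ?_
  obtain ⟨k, hk⟩ := exists_nat_one_div_lt hδ
  filter_upwards [h k] with n hn
  have hN : 0 < N n := (div_pos_iff_of_pos_right (by positivity)).1 ((abs_nonneg _).trans_lt hn)
  have hdiff : a n / N n - m = (a n - m * N n) / N n := by field_simp
  rw [Real.dist_eq, hdiff, abs_div, abs_of_pos hN, div_lt_iff₀ hN]
  calc |a n - m * N n| < N n / (k + 1) := hn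
    _ = 1 / (k + 1) * N n := by ring
    _ ≤ δ * N n := by gcongr

section Blocks

variable {G : Type*}

def IsFairCoinMeasure (μ : Measure (G → Bool)) : Prop :=
  ∀ (K : Finset G) (B : G → Bool), μ {x | ∀ h ∈ K, x h = B h} = (2 : ENNReal)⁻¹ ^ #K

theorem IsFairCoinMeasure.isProbabilityMeasure {μ : Measure (G → Bool)}
    (hμ : IsFairCoinMeasure μ) : IsProbabilityMeasure μ :=
  ⟨by simpa using hμ ∅ fun _ => false⟩

variable [Mul G] {μ : Measure (G → Bool)}

def blockAt (K : Finset G) (B : G → Bool) (g : G) : Set (G → Bool) :=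
  {x | ∀ h ∈ K, x (h * g) = B h}

def TranslatesOverlap (K : Finset G) (g g' : G) : Prop :=
  ∃ h ∈ K, ∃ h' ∈ K, h * g = h' * g'

noncomputable def blockDev (K : Finset G) (B : G → Bool) (s : Finset G) (x : G → Bool) : ℝ :=
  ∑ g ∈ s, ((blockAt K B g).indicator (fun _ => 1) x - 2⁻¹ ^ #K)

theorem measurableSet_blockAt (K : Finset G) (B : G → Bool) (g : G) :
    MeasurableSet (blockAt K B g) := by
  simp only [blockAt, Set.ofPred_forall]
  exact Finset.measurableSet_biInter _ fun h _ =>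
    measurableSet_eq_fun (measurable_pi_apply _) measurable_const

theorem blockDev_eq_card_sub (K : Finset G) (B : G → Bool) (s : Finset G) (x : G → Bool) :
    blockDev K B s x = #{g ∈ s | ∀ h ∈ K, x (h * g) = B h} - 2⁻¹ ^ #K * #s := by
  classical
  simp only [blockDev, sum_sub_distrib, Set.indicator_apply, sum_boole, sum_const, nsmul_eq_mul]
  rw [mul_comm]
  congr

theorem blockDev_eq_sum_fiberwise {ι : Type*} [Fintype ι] [DecidableEq ι] (K : Finset G)
    (B : G → Bool) (s : Finset G) (c : G → ι) (x : G → Bool) :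
    blockDev K B s x = ∑ i, blockDev K B {g ∈ s | c g = i} x :=
  (sum_fiberwise s c _).symm

theorem exists_coloring_translatesOverlap [IsLeftCancelMul G] (K s : Finset G) :
    ∃ c : G → Fin (#K ^ 2 + 1), ∀ g ∈ s, ∀ g' ∈ s, g ≠ g' → c g = c g' →
      ¬ TranslatesOverlap K g g' := by
  classical
  -- by left cancellation, `h * g = h' * g'` determines `g'` once `(h, h')` is fixed
  have hdeg : ∀ g ∈ s, #{g' ∈ s | TranslatesOverlap K g g'} ≤ #K ^ 2 := fun g _ =>
    calc #{g' ∈ s | TranslatesOverlap K g g'}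
        ≤ #((K ×ˢ K).biUnion fun p => {g' ∈ s | p.1 * g = p.2 * g'}) := by
          refine card_le_card fun g' hg' => ?_
          obtain ⟨hg's, h, hh, h', hh', he⟩ := mem_filter.1 hg'
          exact mem_biUnion.2 ⟨(h, h'), mem_product.2 ⟨hh, hh'⟩, mem_filter.2 ⟨hg's, he⟩⟩
      _ ≤ ∑ p ∈ K ×ˢ K, #{g' ∈ s | p.1 * g = p.2 * g'} := card_biUnion_le
      _ ≤ ∑ _p ∈ K ×ˢ K, 1 := sum_le_sum fun p _ => card_le_one.2 fun a ha b hb =>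
          mul_left_cancel ((mem_filter.1 ha).2.symm.trans (mem_filter.1 hb).2)
      _ = #K ^ 2 := by simp [sq]
  obtain ⟨c, hc⟩ := exists_coloring_of_card_filter_le (TranslatesOverlap K)
    (fun _ _ ⟨h, hh, h', hh', he⟩ => ⟨h', hh', h, hh, he.symm⟩) s hdeg
  exact ⟨c, fun g hg g' hg' hne hcc hov => hc g hg g' hg' hne hov hcc⟩

namespace IsFairCoinMeasure

theorem measure_biInter_blockAt [IsRightCancelMul G] (hμ : IsFairCoinMeasure μ)
    (K A : Finset G) (B : G → Bool)
    (hA : (A : Set G).Pairwise fun g g' => ¬ TranslatesOverlap K g g') :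
    μ (⋂ g ∈ A, blockAt K B g) = 2⁻¹ ^ (#K * #A) := by
  classical
  -- the intersection is a single cylinder, over the `#K * #A` points `h * g`
  set f : K × A → G := fun p => p.1 * p.2
  have hf : f.Injective := by
    rintro ⟨⟨h, hh⟩, ⟨g, hg⟩⟩ ⟨⟨h', hh'⟩, ⟨g', hg'⟩⟩ he
    obtain rfl : g = g' := by_contra fun hne => hA hg hg' hne ⟨h, hh, h', hh', he⟩
    obtain rfl : h = h' := mul_right_cancel he
    rfl
  have hset : ⋂ g ∈ A, blockAt K B g
      = {x | ∀ c ∈ univ.image f, x c = Function.extend f (fun p => B p.1) (fun _ => false) c} := by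
    ext x
    simp only [blockAt, Set.mem_iInter, Set.mem_ofPred_eq, forall_mem_image, mem_univ,
      true_imp_iff, hf.extend_apply, f, Prod.forall, Subtype.forall]
    exact ⟨fun hx h hh g hg => hx g hg h hh, fun hx g hg h hh => hx h hh g hg⟩
  rw [hset, hμ, card_image_of_injective _ hf, card_univ, Fintype.card_prod, Fintype.card_coe,
    Fintype.card_coe]

theorem measure_blockAt [IsRightCancelMul G] (hμ : IsFairCoinMeasure μ) (K : Finset G)
    (B : G → Bool) (g : G) : μ (blockAt K B g) = 2⁻¹ ^ #K := by
  simpa using hμ.measure_biInter_blockAt K {g} B (by simp)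

theorem iIndepSet_blockAt [IsRightCancelMul G] (hμ : IsFairCoinMeasure μ) (K A : Finset G)
    (B : G → Bool) (hA : (A : Set G).Pairwise fun g g' => ¬ TranslatesOverlap K g g') :
    iIndepSet (fun g : A => blockAt K B g) μ := by
  classical
  refine (iIndepSet_iff_meas_biInter fun g : A => measurableSet_blockAt K B g).2 fun S => ?_
  have hS := hμ.measure_biInter_blockAt K (S.map (Function.Embedding.subtype _)) B
    (hA.mono fun g hg => by obtain ⟨g, -, rfl⟩ := mem_map.1 hg; exact g.2)
  rw [card_map, map_eq_image, set_biInter_finset_image, Function.Embedding.coe_subtype] at hS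
  rw [hS, prod_congr rfl fun (g : A) _ => hμ.measure_blockAt K B g, prod_const, pow_mul]

theorem hasSubgaussianMGF_blockDev [IsRightCancelMul G] (hμ : IsFairCoinMeasure μ)
    (K A : Finset G) (B : G → Bool)
    (hA : (A : Set G).Pairwise fun g g' => ¬ TranslatesOverlap K g g') :
    HasSubgaussianMGF (blockDev K B A) (#A / 4) μ := by
  have := hμ.isProbabilityMeasure
  set X : A → (G → Bool) → ℝ := fun g => (blockAt K B g).indicator fun _ => 1
  have hmean : ∀ g, μ[X g] = 2⁻¹ ^ #K := fun g => by
    simp [X, integral_indicator (measurableSet_blockAt K B g), measureReal_def,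
      hμ.measure_blockAt]
  have hind : iIndepFun (fun g x => X g x - 2⁻¹ ^ #K) μ :=
    (hμ.iIndepSet_blockAt K A B hA).iIndepFun_indicator.comp _ fun _ =>
      measurable_id.sub_const _
  have hsub : ∀ g, HasSubgaussianMGF (fun x => X g x - 2⁻¹ ^ #K) (1 / 4) μ := fun g => by
    have := hasSubgaussianMGF_of_mem_Icc (μ := μ) (X := X g) (a := 0) (b := 1)
      (measurable_const.indicator (measurableSet_blockAt K B g)).aemeasurable
      (ae_of_all _ fun x => by by_cases hx : x ∈ blockAt K B g <;> simp [X, hx])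
    rw [hmean] at this
    convert this using 1
    rw [sub_zero, nnnorm_one]
    norm_num
  convert HasSubgaussianMGF.sum_of_iIndepFun hind (s := univ) fun g _ => hsub g using 1
  · ext x; exact (sum_coe_sort A _).symm
  · simp [div_eq_mul_inv]

theorem measureReal_abs_blockDev_ge_le [IsCancelMul G] (hμ : IsFairCoinMeasure μ)
    (K : Finset G) (B : G → Bool) {ε : ℝ} (hε : 0 ≤ ε) (s : Finset G) :
    μ.real {x | ε * #s ≤ |blockDev K B s x|}
      ≤ 2 * (#K ^ 2 + 1) * Real.exp (-2 * ε ^ 2 / (#K ^ 2 + 1) ^ 2) ^ #s := by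
  classical
  have := hμ.isProbabilityMeasure
  obtain ⟨c, hc⟩ := exists_coloring_translatesOverlap K s
  set r : ℝ := #K ^ 2 + 1
  set T : Fin (#K ^ 2 + 1) → Finset G := fun i => {g ∈ s | c g = i}
  have hcover : {x | ε * #s ≤ |blockDev K B s x|}
      ⊆ ⋃ i, {x | ε * #s / r ≤ |blockDev K B (T i) x|} := fun x hx => by
    obtain ⟨i, -, hi⟩ := exists_le_of_sum_le univ_nonempty <|
      calc ∑ _ : Fin (#K ^ 2 + 1), ε * #s / r = ε * #s := by simp [r]; field_simp
        _ ≤ |∑ i, blockDev K B (T i) x| := by rwa [← blockDev_eq_sum_fiberwise]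
        _ ≤ ∑ i, |blockDev K B (T i) x| := abs_sum_le_sum_abs _ _
    exact Set.mem_iUnion.2 ⟨i, hi⟩
  have hclass : ∀ i, μ.real {x | ε * #s / r ≤ |blockDev K B (T i) x|}
      ≤ 2 * Real.exp (-2 * ε ^ 2 / r ^ 2) ^ #s := fun i => by
    have hA : (T i : Set G).Pairwise fun g g' => ¬ TranslatesOverlap K g g' :=
      fun g hg g' hg' hne => by
        simp only [T, coe_filter, Set.mem_ofPred_eq] at hg hg'
        exact hc g hg.1 g' hg'.1 hne (hg.2.trans hg'.2.symm)
    have hsub := (hμ.hasSubgaussianMGF_blockDev K (T i) B hA).mono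
      (c' := #s / 4) (by gcongr; exact filter_subset _ s)
    refine (hsub.measureReal_abs_ge_le (by positivity)).trans_eq ?_
    rw [← Real.exp_nat_mul]
    congr 2
    -- for `#s = 0` both exponents are `0`, the left one through division by zero
    rcases eq_or_ne (#s : ℝ) 0 with hs | hs
    · simp [hs]
    · push_cast
      field_simp
      ring
  calc μ.real {x | ε * #s ≤ |blockDev K B s x|}
      ≤ ∑ i, μ.real {x | ε * #s / r ≤ |blockDev K B (T i) x|} :=
        (measureReal_mono hcover).trans (measureReal_iUnion_fintype_le _)
    _ ≤ ∑ _ : Fin (#K ^ 2 + 1), 2 * Real.exp (-2 * ε ^ 2 / r ^ 2) ^ #s :=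
        sum_le_sum fun i _ => hclass i
    _ = _ := by simp [r]; ring

theorem ae_tendsto_card_filter_div [IsCancelMul G] (hμ : IsFairCoinMeasure μ)
    (F : ℕ → Finset G)
    (hsum : ∀ α : ℝ, α ∈ Set.Ioo (0 : ℝ) 1 → Summable fun n => α ^ #(F n))
    (K : Finset G) (B : G → Bool) :
    ∀ᵐ x ∂μ, Tendsto (fun n => (#{g ∈ F n | ∀ h ∈ K, x (h * g) = B h} : ℝ) / #(F n))
      atTop (𝓝 ((1 / 2) ^ #K)) := by
  have := hμ.isProbabilityMeasure
  have hdev : ∀ k : ℕ, ∀ᵐ x ∂μ, ∀ᶠ n in atTop, |blockDev K B (F n) x| < #(F n) / (k + 1) := by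
    intro k
    set α := Real.exp (-2 * (1 / (k + 1)) ^ 2 / (#K ^ 2 + 1) ^ 2)
    have hα : α ∈ Set.Ioo (0 : ℝ) 1 := ⟨Real.exp_pos _, Real.exp_lt_one_iff.2 <|
      div_neg_of_neg_of_pos (mul_neg_of_neg_of_pos (by norm_num) (by positivity)) (by positivity)⟩
    filter_upwards [ae_eventually_notMem_of_measureReal_le ((hsum α hα).mul_left _)
      fun n => hμ.measureReal_abs_blockDev_ge_le K B (ε := 1 / (k + 1)) (by positivity) (F n)]
      with x hx
    filter_upwards [hx] with n hn
    simpa [div_eq_inv_mul] using hn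
  filter_upwards [ae_all_iff.2 hdev] with x hx
  refine tendsto_div_of_forall_eventually_abs_sub_mul_lt fun k => ?_
  simpa [blockDev_eq_card_sub] using hx k

end IsFairCoinMeasure

end Blocks

theorem ae_isNormalFun_general
    {G : Type*} [Semigroup G] [IsCancelMul G] [Countable G]
    (F : ℕ → Finset G)
    (hsum : ∀ α : ℝ, α ∈ Set.Ioo (0 : ℝ) 1 → Summable fun n => α ^ (F n).card)
    (μ : Measure (G → Bool))
    (hμ : ∀ (K : Finset G) (B : G → Bool),
      μ {x | ∀ h ∈ K, x h = B h} = (2 : ENNReal)⁻¹ ^ K.card) :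
    ∀ᵐ x ∂μ, IsNormalFun F x := by
  classical
  -- a block matters only on `K`, so the blocks `(· ∈ S)` for finite `S` suffice
  have h := ae_all_iff.2 fun KS : Finset G × Finset G =>
    IsFairCoinMeasure.ae_tendsto_card_filter_div hμ F hsum KS.1 fun h => decide (h ∈ KS.2)
  filter_upwards [h] with x hx K _ B
  have hfilter : ∀ s : Finset G, {g ∈ s | ∀ h ∈ K, x (h * g) = decide (h ∈ {h ∈ K | B h})}
      = {g ∈ s | ∀ h ∈ K, x (h * g) = B h} := fun s =>
    filter_congr fun g _ => forall₂_congr fun h hh => by simp [hh]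
  simpa only [hfilter] using hx (K, {h ∈ K | B h})

/-- If `G` is a countably infinite cancellative semigroup and `(F n)` is a
Følner sequence with `∑ α^{|F n|} < ∞` for all `α ∈ (0,1)`, then `λ`-almost every
`x ∈ {0,1}^G` is `(F n)`-normal, where `λ = μ` is the Bernoulli `(1/2,1/2)`-product
measure on `{0,1}^G` (characterized by its values on cylinder sets). -/
theorem ae_isNormalFun
    {G : Type*} [Semigroup G] [IsCancelMul G] [Countable G] [Infinite G]
    (F : ℕ → Finset G) (hF : IsFolner F)
    (hsum : ∀ α : ℝ, α ∈ Set.Ioo (0 : ℝ) 1 → Summable fun n => α ^ (F n).card)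
    (μ : Measure (G → Bool))
    (hμ : ∀ (K : Finset G) (B : G → Bool),
      μ {x | ∀ h ∈ K, x h = B h} = (2 : ENNReal)⁻¹ ^ K.card) :
    ∀ᵐ x ∂μ, IsNormalFun F x :=
  ae_isNormalFun_general F hsum μ hμ
end

section
/- Let G be a countably infinite cancellative semigroup and let (F_n) be a Følner sequence in G. Then the set of (F_n)-normal elements of {0,1}^G is meagre (of first Baire category) in {0,1}^G, where {0,1} carries the discrete topology and {0,1}^G the product topology. -/
/-!
Fix `g₀ ∈ G` and `1/2 < c < 1`. Along `F n`, a normal `x` has `x (g₀ * g) = true` with frequency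
tending to `1/2`, so from some `m` on this frequency stays `≤ c`. For fixed `m` this is a closed
condition, and it fails for every configuration that is `true` off a finite set `Z`: by left
cancellation such a configuration has frequency at least `1 - |Z| / |F n|`, which tends to `1`
because a Følner sequence in an infinite right-cancellative semigroup has `|F n| → ∞` (for finite
`S ⊆ G`, eventually some `h ∈ F n` has `S * h ⊆ F n`). These configurations are dense, so the
normal elements lie in a countable union of closed nowhere dense sets.
-/

open Filter

open Topology Finset Function

theorem Finset.exists_mem_forall_of_sum_card_filter_not_lt {α β : Type*} {A : Finset α}
    {S : Finset β} (p : β → α → Prop) [∀ b, DecidablePred (p b)]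
    (h : ∑ b ∈ S, #{a ∈ A | ¬ p b a} < #A) : ∃ a ∈ A, ∀ b ∈ S, p b a := by
  classical
  by_contra! hA
  have hcover : A ⊆ S.biUnion fun b => {a ∈ A | ¬ p b a} := fun a ha => by
    obtain ⟨b, hb, hpb⟩ := hA a ha
    exact mem_biUnion.2 ⟨b, hb, mem_filter.2 ⟨ha, hpb⟩⟩
  exact (card_le_card hcover |>.trans card_biUnion_le).not_gt h

section Folner

variable {G : Type*} [Mul G] {F : ℕ → Finset G}

open scoped Classical in
theorem IsFolner.tendsto_card_filter_notMem_div (hF : IsFolner F) (g : G) :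
    Tendsto (fun n => (#{h ∈ F n | g * h ∉ F n} : ℝ) / #(F n)) atTop (𝓝 0) := by
  have hsplit : ∀ n, (#{h ∈ F n | g * h ∉ F n} : ℝ) / #(F n)
      = 1 - (#{h ∈ F n | g * h ∈ F n} : ℝ) / #(F n) := fun n => by
    have hpos : (0 : ℝ) < #(F n) := by exact_mod_cast (hF.1 n).card_pos
    rw [eq_sub_iff_add_eq, ← add_div, div_eq_one_iff_eq hpos.ne', add_comm]
    exact_mod_cast card_filter_add_card_filter_not _
  simpa [hsplit] using (hF.2 g).const_sub 1

theorem IsFolner.tendsto_card_atTop [IsRightCancelMul G] [Infinite G] (hF : IsFolner F) :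
    Tendsto (fun n => #(F n)) atTop atTop := by
  classical
  refine tendsto_atTop.2 fun k => ?_
  obtain ⟨S, rfl⟩ := Infinite.exists_subset_card_eq G k
  have hsum : Tendsto (fun n => ∑ g ∈ S, (#{h ∈ F n | g * h ∉ F n} : ℝ) / #(F n))
      atTop (𝓝 0) := by
    simpa using tendsto_finsetSum S fun g _ => hF.tendsto_card_filter_notMem_div g
  filter_upwards [hsum.eventually_lt_const one_pos] with n hn
  have hpos : (0 : ℝ) < #(F n) := by exact_mod_cast (hF.1 n).card_pos
  rw [← sum_div, div_lt_one hpos] at hn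
  obtain ⟨h, -, hSh⟩ :=
    exists_mem_forall_of_sum_card_filter_not_lt (fun g h => g * h ∈ F n) (by exact_mod_cast hn)
  exact card_le_card_of_injOn (· * h) hSh (mul_left_injective h).injOn

end Folner

theorem dense_setOf_eventually_cofinite_eq {ι β : Type*} [TopologicalSpace β] (c : β) :
    Dense {y : ι → β | ∀ᶠ i in cofinite, y i = c} := by
  classical
  intro x
  refine mem_closure_of_tendsto (f := fun J : Finset ι => J.piecewise x fun _ => c) (b := atTop)
    (tendsto_pi_nhds.2 fun i => tendsto_const_nhds.congr' ?_)
    (Eventually.of_forall fun J => J.eventually_cofinite_notMem.mono fun i hi => ?_)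
  · filter_upwards [eventually_ge_atTop {i}] with J hJ
    exact (J.piecewise_eq_of_mem _ _ (singleton_subset_iff.1 hJ)).symm
  · exact J.piecewise_eq_of_notMem _ _ hi

theorem continuous_card_filter_comp {α ι β : Type*} [TopologicalSpace β] [DiscreteTopology β]
    (A : Finset α) (φ : α → ι) (p : β → Prop) [DecidablePred p] :
    Continuous fun x : ι → β => #{a ∈ A | p (x (φ a))} := by
  simp_rw [card_filter]
  exact continuous_finsetSum _ fun a _ =>
    (continuous_of_discreteTopology (f := fun b : β => if p b then 1 else 0)).comp
      (continuous_apply (φ a))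

section Frequency

variable {α ι : Type*} {A : ℕ → Finset α} {φ : α → ι}

theorem eventually_lt_frequency_of_eventually_cofinite
    (hA : Tendsto (fun n => #(A n)) atTop atTop) (hφ : Injective φ) {c : ℝ} (hc : c < 1)
    {y : ι → Bool} (hy : ∀ᶠ i in cofinite, y i = true) :
    ∀ᶠ n in atTop, c < (#{a ∈ A n | y (φ a) = true} : ℝ) / #(A n) := by
  set Z := (eventually_cofinite.1 hy).toFinset
  have hlarge : ∀ᶠ n in atTop, (#Z : ℝ) / (1 - c) < #(A n) :=
    (tendsto_natCast_atTop_atTop.comp hA).eventually_gt_atTop _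
  filter_upwards [hlarge] with n hn
  have hZ : (#Z : ℝ) < (1 - c) * #(A n) := by rwa [div_lt_iff₀' (sub_pos.2 hc)] at hn
  have hpos : (0 : ℝ) < #(A n) := (div_nonneg (#Z).cast_nonneg (sub_pos.2 hc).le).trans_lt hn
  have hbad : (#{a ∈ A n | ¬ y (φ a) = true} : ℝ) ≤ #Z := by
    exact_mod_cast card_le_card_of_injOn φ (fun a ha => by simpa [Z] using (mem_filter.1 ha).2)
      hφ.injOn
  have hsplit : (#{a ∈ A n | y (φ a) = true} : ℝ) + #{a ∈ A n | ¬ y (φ a) = true} = #(A n) := by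
    exact_mod_cast card_filter_add_card_filter_not _
  rw [lt_div_iff₀ hpos]
  linarith

theorem isMeagre_setOf_tendsto_frequency (hA : Tendsto (fun n => #(A n)) atTop atTop)
    (hφ : Injective φ) {l : ℝ} (hl : l < 1) :
    IsMeagre {x : ι → Bool |
      Tendsto (fun n => (#{a ∈ A n | x (φ a) = true} : ℝ) / #(A n)) atTop (𝓝 l)} := by
  obtain ⟨c, hlc, hc⟩ := exists_between hl
  set C : ℕ → Set (ι → Bool) :=
    fun m => {x | ∀ n ≥ m, (#{a ∈ A n | x (φ a) = true} : ℝ) / #(A n) ≤ c}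
  have hclosed (m : ℕ) : IsClosed (C m) := by
    simp only [C, Set.ofPred_forall]
    exact isClosed_biInter fun n _ => (isClosed_discrete {k : ℕ | (k : ℝ) / #(A n) ≤ c}).preimage
      (continuous_card_filter_comp (A n) φ (· = true))
  have hdense (m : ℕ) : Dense (C m)ᶜ := (dense_setOf_eventually_cofinite_eq true).mono
    fun y hy hyC => by
      obtain ⟨n, hcn, hmn⟩ :=
        ((eventually_lt_frequency_of_eventually_cofinite hA hφ hc hy).and
          (eventually_ge_atTop m)).exists
      exact (hyC n hmn).not_gt hcn
  refine (isMeagre_iUnion fun m => IsNowhereDense.isMeagre ((hclosed m).isNowhereDense_iff.2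
    (interior_eq_empty_iff_dense_compl.2 (hdense m)))).mono fun x hx => ?_
  obtain ⟨m, hm⟩ := eventually_atTop.1 (hx.eventually_lt_const hlc)
  exact Set.mem_iUnion.2 ⟨m, fun n hn => (hm n hn).le⟩

end Frequency

theorem normal_elements_meagre_general
    {G : Type*} [Semigroup G] [IsCancelMul G] [Infinite G]
    (F : ℕ → Finset G) (hF : IsFolner F) :
    IsMeagre {x : G → Bool | IsNormalFun F x} := by
  obtain ⟨g₀⟩ := ‹Infinite G›.nonempty
  refine (isMeagre_setOf_tendsto_frequency hF.tendsto_card_atTop (mul_right_injective g₀)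
    (by norm_num : (1 / 2 : ℝ) < 1)).mono fun x hx => ?_
  simpa using hx {g₀} (singleton_nonempty g₀) fun _ => true

/-- For a countably infinite cancellative semigroup `G` and a Følner sequence `(F n)`,
the set of `(F n)`-normal elements of `{0,1}^G` is meagre (of first Baire category)
in the product topology (with `{0,1}` discrete). -/
theorem normal_elements_meagre
    {G : Type*} [Semigroup G] [IsCancelMul G] [Countable G] [Infinite G]
    (F : ℕ → Finset G) (hF : IsFolner F) :
    IsMeagre {x : G → Bool | IsNormalFun F x} :=
  normal_elements_meagre_general F hF
end

section
/- For any Følner sequence (K_n) in (ℕ,×) there exists a set A ⊆ ℕ with (K_n)-density 1 and universal additive density 0; that is, |A ∩ K_n|/|K_n| → 1, while for every Følner sequence (F_n) in (ℕ,+), |A ∩ F_n|/|F_n| → 0. -/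
/-!
Take `A = ⋃ n, (K n ∩ 2 ^ J n ℕ)` for a slowly growing `J → ∞`. Along a multiplicative Følner
sequence the multiples of a fixed `k` have density `1`, since they contain `k · (K n ∩ K n / k)`;
a diagonal choice of `J` keeps the `K n`-density of `A` tending to `1`. On the other hand
`A \ 2 ^ j ℕ` is finite for every `j`, whereas along an additive Følner sequence finite sets have
density `0` and the multiples of `d` have upper density at most `1 / d`, because `d` shifts of them
into disjoint residue classes almost stay inside `F n`.
-/

open Filter

def AddFolner (F : ℕ → Finset ℕ) : Prop :=
  (∀ n, (F n).Nonempty) ∧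
  ∀ k : ℕ, Tendsto
    (fun n => (((F n).filter (fun m => m + k ∈ F n)).card : ℝ) / (F n).card)
    atTop (nhds 1)

/- `(F n)` is a Følner sequence in `(ℕ,×)` (positive integers under multiplication). -/
def MulFolner (F : ℕ → Finset ℕ) : Prop :=
  (∀ n, (F n).Nonempty) ∧ (∀ n, 0 ∉ F n) ∧
  ∀ k : ℕ, 0 < k → Tendsto
    (fun n => (((F n).filter (fun m => k * m ∈ F n)).card : ℝ) / (F n).card)
    atTop (nhds 1)

open scoped Topology Finset

theorem Filter.exists_tendsto_atTop_eventually_diag {P : ℕ → ℕ → Prop}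
    (h : ∀ j, ∀ᶠ n in atTop, P j n) :
    ∃ J : ℕ → ℕ, Tendsto J atTop atTop ∧ ∀ᶠ n in atTop, P (J n) n := by
  classical
  choose M hM using fun j => eventually_atTop.1 ((h j).and (eventually_ge_atTop j))
  refine ⟨fun n => Nat.findGreatest (fun j => M j ≤ n) n,
    tendsto_atTop_atTop.2 fun j => ⟨M j, fun n hn => ?_⟩, ?_⟩
  · exact Nat.le_findGreatest ((hM j (M j) le_rfl).2.trans hn) hn
  · filter_upwards [eventually_ge_atTop (M 0)] with n hn
    exact (hM _ n (Nat.findGreatest_spec (P := fun j => M j ≤ n) (Nat.zero_le n) hn)).1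

theorem Filter.exists_tendsto_atTop_tendsto_diag {X : Type*} {l : Filter X}
    [l.IsCountablyGenerated] {u : ℕ → ℕ → X} (h : ∀ j, Tendsto (u j) atTop l) :
    ∃ J : ℕ → ℕ, Tendsto J atTop atTop ∧ Tendsto (fun n => u (J n) n) atTop l := by
  obtain ⟨s, hs⟩ := l.exists_antitone_basis
  obtain ⟨J, hJ, hmem⟩ :=
    exists_tendsto_atTop_eventually_diag fun j => h j (hs.mem j)
  refine ⟨J, hJ, hs.1.tendsto_right_iff.2 fun i _ => ?_⟩
  filter_upwards [hmem, hJ.eventually_ge_atTop i] with n hn hi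
  exact hs.antitone hi hn

section relDensity

variable {α : Type*}

open scoped Classical

noncomputable def relDensity (s : Finset α) (A : Set α) : ℝ := (#(s.filter (· ∈ A)) : ℝ) / #s

theorem relDensity_nonneg (s : Finset α) (A : Set α) : 0 ≤ relDensity s A := by
  unfold relDensity; positivity

theorem relDensity_le_one (s : Finset α) (A : Set α) : relDensity s A ≤ 1 := by
  unfold relDensity
  exact div_le_one_of_le₀ (by gcongr; exact Finset.filter_subset _ _) (Nat.cast_nonneg _)

theorem relDensity_mono {s : Finset α} {A B : Set α} (h : ∀ x ∈ s, x ∈ A → x ∈ B) :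
    relDensity s A ≤ relDensity s B := by
  unfold relDensity
  gcongr ((#?_ : ℕ) : ℝ) / _
  exact Finset.monotone_filter_right s fun x hx => h x hx

theorem relDensity_union_le (s : Finset α) (A B : Set α) :
    relDensity s (A ∪ B) ≤ relDensity s A + relDensity s B := by
  unfold relDensity
  rw [← add_div, ← Nat.cast_add]
  gcongr
  refine (Finset.card_le_card fun x hx => ?_).trans (Finset.card_union_le _ _)
  simp only [Finset.mem_filter, Finset.mem_union, Set.mem_union] at hx ⊢
  tauto

theorem relDensity_eq (s : Finset α) (A : Set α) [DecidablePred (· ∈ A)] :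
    relDensity s A = (#(s.filter (· ∈ A)) : ℝ) / #s := by
  rw [relDensity]
  congr

theorem relDensity_le_of_finite (s : Finset α) {A : Set α} (hA : A.Finite) :
    relDensity s A ≤ #hA.toFinset / #s := by
  unfold relDensity
  gcongr
  exact fun x hx => by simpa using (Finset.mem_filter.1 hx).2

end relDensity

theorem MulFolner.tendsto_relDensity_dvd {K : ℕ → Finset ℕ} (hK : MulFolner K) {k : ℕ}
    (hk : 0 < k) : Tendsto (fun n => relDensity (K n) {m | k ∣ m}) atTop (𝓝 1) := by
  refine tendsto_of_tendsto_of_tendsto_of_le_of_le (hK.2.2 k hk) tendsto_const_nhds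
    (fun n => ?_) fun n => relDensity_le_one _ _
  unfold relDensity
  gcongr ((?_ : ℕ) : ℝ) / _
  refine Finset.card_le_card_of_injOn (k * ·) (fun m hm => ?_)
    (mul_right_injective₀ hk.ne').injOn
  simp only [Finset.coe_filter, Set.mem_ofPred_eq] at hm ⊢
  exact ⟨hm.2, dvd_mul_right k m⟩

theorem Finset.mul_card_filter_dvd_le (s : Finset ℕ) {k : ℕ} (hk : 0 < k) :
    k * #(s.filter (k ∣ ·)) ≤ #s + ∑ j ∈ range k, #(s.filter (· + j ∉ s)) := by
  have hfiber : ∑ j ∈ range k, #(s.filter (· % k = j)) = #s :=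
    (card_eq_sum_card_fiberwise fun m _ => mem_range.2 (Nat.mod_lt m hk)).symm
  have hshift : ∀ j ∈ range k,
      #(s.filter (k ∣ ·)) ≤ #(s.filter (· % k = j)) + #(s.filter (· + j ∉ s)) := by
    intro j hj
    -- `m ↦ m + j` maps the multiples of `k` whose shift stays in `s` into the class of `j`
    rw [← card_filter_add_card_filter_not (s := s.filter (k ∣ ·)) (· + j ∈ s)]
    gcongr ?_ + ?_
    · refine card_le_card_of_injOn (· + j) (fun m hm => ?_) (add_left_injective j).injOn
      simp only [coe_filter, mem_filter, Set.mem_ofPred_eq] at hm ⊢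
      obtain ⟨⟨-, c, rfl⟩, hmj⟩ := hm
      refine ⟨hmj, ?_⟩
      rw [add_comm, Nat.add_mul_mod_self_left, Nat.mod_eq_of_lt (mem_range.1 hj)]
    · exact card_le_card (monotone_filter_left _ (filter_subset _ s))
  calc k * #(s.filter (k ∣ ·)) = ∑ j ∈ range k, #(s.filter (k ∣ ·)) := by simp
    _ ≤ ∑ j ∈ range k, (#(s.filter (· % k = j)) + #(s.filter (· + j ∉ s))) := sum_le_sum hshift
    _ = #s + ∑ j ∈ range k, #(s.filter (· + j ∉ s)) := by rw [sum_add_distrib, hfiber]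

theorem mul_relDensity_dvd_le {s : Finset ℕ} (hs : s.Nonempty) {k : ℕ} (hk : 0 < k) :
    k * relDensity s {m | k ∣ m} ≤
      1 + ∑ j ∈ Finset.range k, (1 - (#(s.filter (· + j ∈ s)) : ℝ) / #s) := by
  have hs' : (0 : ℝ) < #s := by exact_mod_cast hs.card_pos
  calc k * relDensity s {m | k ∣ m} = (k * #(s.filter (k ∣ ·)) : ℕ) / (#s : ℝ) := by
        rw [relDensity_eq, Nat.cast_mul, mul_div_assoc]; rfl
    _ ≤ (#s + ∑ j ∈ Finset.range k, #(s.filter (· + j ∉ s)) : ℕ) / (#s : ℝ) := by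
        gcongr; exact s.mul_card_filter_dvd_le hk
    _ = 1 + ∑ j ∈ Finset.range k, (1 - (#(s.filter (· + j ∈ s)) : ℝ) / #s) := by
        push_cast
        rw [add_div, div_self hs'.ne', Finset.sum_div]
        congr 1
        refine Finset.sum_congr rfl fun j _ => ?_
        rw [eq_sub_iff_add_eq', ← add_div, div_eq_one_iff_eq hs'.ne']
        exact_mod_cast Finset.card_filter_add_card_filter_not (s := s) (· + j ∈ s)

namespace AddFolner

variable {F : ℕ → Finset ℕ}

theorem tendsto_one_sub (hF : AddFolner F) (j : ℕ) :
    Tendsto (fun n => 1 - (#((F n).filter (· + j ∈ F n)) : ℝ) / #(F n)) atTop (𝓝 0) := by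
  simpa using (hF.2 j).const_sub 1

theorem tendsto_inv_card (hF : AddFolner F) : Tendsto (fun n => (#(F n) : ℝ)⁻¹) atTop (𝓝 0) := by
  refine tendsto_of_tendsto_of_tendsto_of_le_of_le tendsto_const_nhds (hF.tendsto_one_sub 1)
    (fun n => by positivity) fun n => ?_
  have hpos : (0 : ℝ) < #(F n) := by exact_mod_cast (hF.1 n).card_pos
  -- the maximum of `F n` is not followed by an element of `F n`
  have hlt : #((F n).filter (· + 1 ∈ F n)) < #(F n) :=
    Finset.card_lt_card <| Finset.filter_ssubset.2
      ⟨(F n).max' (hF.1 n), (F n).max'_mem _, fun h => by linarith [(F n).le_max' _ h]⟩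
  have hle : (#((F n).filter (· + 1 ∈ F n)) : ℝ) + 1 ≤ #(F n) := by exact_mod_cast hlt
  rw [le_sub_iff_add_le, inv_eq_one_div, ← add_div, div_le_one hpos]
  linarith

theorem tendsto_relDensity_of_finite (hF : AddFolner F) {A : Set ℕ} (hA : A.Finite) :
    Tendsto (fun n => relDensity (F n) A) atTop (𝓝 0) := by
  refine tendsto_of_tendsto_of_tendsto_of_le_of_le tendsto_const_nhds ?_
    (fun n => relDensity_nonneg _ _) fun n => relDensity_le_of_finite _ hA
  simpa [div_eq_mul_inv] using hF.tendsto_inv_card.const_mul (#hA.toFinset : ℝ)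

theorem eventually_relDensity_dvd_lt (hF : AddFolner F) {k : ℕ} (hk : 0 < k) {c : ℝ}
    (hc : (k : ℝ)⁻¹ < c) : ∀ᶠ n in atTop, relDensity (F n) {m | k ∣ m} < c := by
  have hk' : (0 : ℝ) < k := by exact_mod_cast hk
  have hbound : Tendsto (fun n => (1 + ∑ j ∈ Finset.range k,
      (1 - (#((F n).filter (· + j ∈ F n)) : ℝ) / #(F n))) / k) atTop (𝓝 (k : ℝ)⁻¹) := by
    have := ((tendsto_finsetSum (Finset.range k) fun j _ => hF.tendsto_one_sub j).const_add
      1).div_const (k : ℝ)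
    rwa [Finset.sum_const_zero, add_zero, one_div] at this
  filter_upwards [hbound.eventually_lt_const hc] with n hn
  exact ((le_div_iff₀' hk').2 (mul_relDensity_dvd_le (hF.1 n) hk)).trans_lt hn

theorem tendsto_relDensity_zero (hF : AddFolner F) {A : Set ℕ}
    (hA : ∃ᶠ d in atTop, (A \ {m | d ∣ m}).Finite) :
    Tendsto (fun n => relDensity (F n) A) atTop (𝓝 0) := by
  refine tendsto_order.2 ⟨fun a ha => .of_forall fun n => ha.trans_le (relDensity_nonneg _ _),
    fun ε hε => ?_⟩
  obtain ⟨d, hfin, hd⟩ := (hA.and_eventually (eventually_gt_atTop ⌈2 / ε⌉₊)).exists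
  have hd' : (d : ℝ)⁻¹ < ε / 2 := by
    have : 2 / ε < d := Nat.lt_of_ceil_lt hd
    rw [inv_lt_comm₀ (Nat.cast_pos.2 (Nat.zero_lt_of_lt hd)) (half_pos hε)]
    simpa [div_div_eq_mul_div] using this
  filter_upwards [hF.eventually_relDensity_dvd_lt (Nat.zero_lt_of_lt hd) hd',
    (hF.tendsto_relDensity_of_finite hfin).eventually_lt_const (half_pos hε)] with n hdvd hrest
  calc relDensity (F n) A ≤ relDensity (F n) (A \ {m | d ∣ m} ∪ {m | d ∣ m}) :=
        relDensity_mono fun m _ hm => Set.subset_sdiff_union _ _ hm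
    _ ≤ relDensity (F n) (A \ {m | d ∣ m}) + relDensity (F n) {m | d ∣ m} :=
        relDensity_union_le _ _ _
    _ < ε := by linarith

end AddFolner

open scoped Classical in
theorem exists_mulDense_addNull
    (K : ℕ → Finset ℕ) (hK : MulFolner K) :
    ∃ A : Set ℕ,
      Tendsto (fun n => (((K n).filter (· ∈ A)).card : ℝ) / (K n).card) atTop (nhds 1) ∧
      ∀ F : ℕ → Finset ℕ, AddFolner F →
        Tendsto (fun n => (((F n).filter (· ∈ A)).card : ℝ) / (F n).card) atTop (nhds 0) := by
  obtain ⟨J, hJ, hdens⟩ :=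
    exists_tendsto_atTop_tendsto_diag fun j => hK.tendsto_relDensity_dvd (pow_pos two_pos j)
  set A : Set ℕ := {m | ∃ n, m ∈ K n ∧ 2 ^ J n ∣ m}
  have hfin (j : ℕ) : (A \ {m | 2 ^ j ∣ m}).Finite := by
    obtain ⟨N, hN⟩ := tendsto_atTop_atTop.1 hJ j
    refine ((Finset.range N).biUnion K).finite_toSet.subset ?_
    rintro m ⟨⟨n, hmK, hdvd⟩, hndvd⟩
    have hn : n < N := by
      by_contra! h
      exact hndvd ((pow_dvd_pow 2 (hN n h)).trans hdvd)
    simpa using ⟨n, hn, hmK⟩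
  refine ⟨A, ?_, fun F hF => hF.tendsto_relDensity_zero ?_⟩
  · exact tendsto_of_tendsto_of_tendsto_of_le_of_le hdens tendsto_const_nhds
      (fun n => relDensity_mono fun m hm hdvd => ⟨n, hm, hdvd⟩) fun n => relDensity_le_one _ _
  · exact frequently_atTop.2 fun j => ⟨2 ^ j, j.lt_two_pow_self.le, hfin j⟩
end

section
/- Let i, j, k be positive integers. Then every thick set S ⊆ ℕ contains a solution of the equation i·a + j·b = k·c (i.e., there exist a, b, c ∈ S with i·a + j·b = k·c) if and only if k ∈ {i, j, i+j}. -/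
/-! If `k ∈ {i, j, i + j}` a solution is found inside one or two long intervals of a thick set:
`k = i + j` is solved by `a = b = c`, and `k = i` by taking `b` a multiple `i * q` of `i` and
`c = a + j * q`.

Otherwise the thick set `⋃ₘ (Nᵐ, Nᵐ + m]` with `N = 2(i + j + k) + 1` has no solution. Let
`x = Nᵐ⁺¹` be the start of the highest interval met by a solution `a, b, c`. Each of them is
`e * x + r` with `e ∈ {0, 1}` and `(i + j + k) * r < x`, so comparing the leading base-`x` digits
of `i * a + j * b = k * c` gives `i * e_a + j * e_b = k * e_c`. As one of `e_a, e_b, e_c` is `1`,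
this forces `k ∈ {i, j, i + j}`. -/

def ThickSet (S : Set ℕ) : Prop :=
  ∀ L : ℕ, ∃ a : ℕ, ∀ i : ℕ, 1 ≤ i → i ≤ L → a + i ∈ S

namespace ThickSet

variable {S : Set ℕ}

theorem nonempty (hS : ThickSet S) : S.Nonempty :=
  let ⟨a, ha⟩ := hS 1
  ⟨a + 1, ha 1 le_rfl le_rfl⟩

theorem exists_mem_dvd (hS : ThickSet S) {n : ℕ} (hn : 0 < n) : ∃ b ∈ S, n ∣ b := by
  obtain ⟨a, ha⟩ := hS n
  have hlt : a < n * (a / n + 1) := Nat.lt_mul_div_succ a hn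
  have hle : n * (a / n + 1) ≤ a + n := by
    rw [mul_add, mul_one]
    have := Nat.mul_div_le a n
    omega
  refine ⟨n * (a / n + 1), ?_, dvd_mul_right _ _⟩
  simpa [Nat.add_sub_cancel' hlt.le] using ha (n * (a / n + 1) - a) (by omega) (by omega)

theorem exists_mem_add_mem (hS : ThickSet S) (d : ℕ) : ∃ a ∈ S, a + d ∈ S := by
  obtain ⟨a, ha⟩ := hS (d + 1)
  exact ⟨a + 1, ha 1 le_rfl (by omega),
    by simpa [add_assoc, add_comm 1] using ha (d + 1) (by omega) le_rfl⟩

theorem exists_mul_add_mul_eq_mul_left (hS : ThickSet S) {i : ℕ} (hi : 0 < i) (j : ℕ) :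
    ∃ a ∈ S, ∃ b ∈ S, ∃ c ∈ S, i * a + j * b = i * c := by
  obtain ⟨_, hb, q, rfl⟩ := hS.exists_mem_dvd hi
  obtain ⟨a, ha, hc⟩ := hS.exists_mem_add_mem (j * q)
  exact ⟨a, ha, i * q, hb, a + j * q, hc, by ring⟩

end ThickSet

theorem Nat.eq_of_mul_add_eq_mul_add {x s t u v : ℕ} (hu : u < x) (hv : v < x)
    (h : s * x + u = t * x + v) : s = t := by
  have hx : 0 < x := by omega
  have hs := (Nat.div_mod_unique hx).2 ⟨show u + x * s = s * x + u by ring, hu⟩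
  have ht := (Nat.div_mod_unique hx).2 ⟨show v + x * t = s * x + u by rw [h]; ring, hv⟩
  exact hs.1.symm.trans ht.1

theorem exists_eq_mul_add_of_le_or_mem {x R n : ℕ} (h : n ≤ R ∨ x ≤ n ∧ n ≤ x + R) :
    ∃ e ≤ 1, ∃ r ≤ R, n = e * x + r := by
  rcases h with h | ⟨h₁, h₂⟩
  · exact ⟨0, zero_le_one, n, h, by simp⟩
  · exact ⟨1, le_rfl, n - x, by omega, by omega⟩

theorem leading_digits_eq {i j k x R ea eb ec ra rb rc : ℕ} (hR : (i + j + k) * R < x)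
    (hra : ra ≤ R) (hrb : rb ≤ R) (hrc : rc ≤ R)
    (h : i * (ea * x + ra) + j * (eb * x + rb) = k * (ec * x + rc)) :
    i * ea + j * eb = k * ec := by
  refine Nat.eq_of_mul_add_eq_mul_add (x := x) (u := i * ra + j * rb) (v := k * rc) ?_ ?_ ?_
  · nlinarith
  · nlinarith
  · linarith

theorem eq_or_le_of_mul_add_mul_eq {i j k x R a b c : ℕ} (hi : 0 < i) (hj : 0 < j) (hk : 0 < k)
    (hR : (i + j + k) * R < x) (ha : a ≤ R ∨ x ≤ a ∧ a ≤ x + R)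
    (hb : b ≤ R ∨ x ≤ b ∧ b ≤ x + R) (hc : c ≤ R ∨ x ≤ c ∧ c ≤ x + R)
    (h : i * a + j * b = k * c) :
    (k = i ∨ k = j ∨ k = i + j) ∨ (a ≤ R ∧ b ≤ R ∧ c ≤ R) := by
  obtain ⟨ea, hea, ra, hra, rfl⟩ := exists_eq_mul_add_of_le_or_mem ha
  obtain ⟨eb, heb, rb, hrb, rfl⟩ := exists_eq_mul_add_of_le_or_mem hb
  obtain ⟨ec, hec, rc, hrc, rfl⟩ := exists_eq_mul_add_of_le_or_mem hc
  have hd := leading_digits_eq hR hra hrb hrc h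
  interval_cases ea <;> interval_cases eb <;> interval_cases ec <;> omega

def sparseIntervals (N : ℕ) : Set ℕ :=
  ⋃ m, Set.Ioc (N ^ m) (N ^ m + m)

theorem thickSet_sparseIntervals (N : ℕ) : ThickSet (sparseIntervals N) := fun L =>
  ⟨N ^ L, fun t h₁ h₂ => Set.mem_iUnion.2 ⟨L, by simp only [Set.mem_Ioc]; omega⟩⟩

theorem le_or_mem_of_mem_Ioc_pow {N l m n : ℕ} (hN : 1 ≤ N) (hl : l ≤ m + 1)
    (hn : n ∈ Set.Ioc (N ^ l) (N ^ l + l)) :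
    n ≤ N ^ m + m + 1 ∨ N ^ (m + 1) ≤ n ∧ n ≤ N ^ (m + 1) + (N ^ m + m + 1) := by
  rw [Set.mem_Ioc] at hn
  rcases hl.lt_or_eq with hl | rfl
  · have := pow_le_pow_right₀ hN (Nat.le_of_lt_succ hl)
    omega
  · omega

theorem mul_lt_pow_succ (K m : ℕ) : K * ((2 * K + 1) ^ m + m + 1) < (2 * K + 1) ^ (m + 1) := by
  rcases Nat.eq_zero_or_pos K with rfl | hK
  · simp
  · have : m < (2 * K + 1) ^ m := Nat.lt_pow_self (by omega)
    rw [pow_succ]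
    nlinarith

theorem eq_of_mem_sparseIntervals {i j k a b c : ℕ} (hi : 0 < i) (hj : 0 < j) (hk : 0 < k)
    (ha : a ∈ sparseIntervals (2 * (i + j + k) + 1))
    (hb : b ∈ sparseIntervals (2 * (i + j + k) + 1))
    (hc : c ∈ sparseIntervals (2 * (i + j + k) + 1)) (h : i * a + j * b = k * c) :
    k = i ∨ k = j ∨ k = i + j := by
  set N := 2 * (i + j + k) + 1
  obtain ⟨la, ha⟩ := Set.mem_iUnion.1 ha
  obtain ⟨lb, hb⟩ := Set.mem_iUnion.1 hb
  obtain ⟨lc, hc⟩ := Set.mem_iUnion.1 hc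
  obtain ⟨m, hm⟩ : ∃ m, max la (max lb lc) = m + 1 := by
    refine Nat.exists_eq_succ_of_ne_zero ?_
    simp only [Set.mem_Ioc] at ha
    omega
  have hN : 1 ≤ N := by omega
  have top {l n : ℕ} (hl : l = m + 1) (hn : n ∈ Set.Ioc (N ^ l) (N ^ l + l)) :
      N ^ m + m + 1 < n := by
    subst hl
    have hR : (i + j + k) * (N ^ m + m + 1) < N ^ (m + 1) := mul_lt_pow_succ (i + j + k) m
    have := Nat.le_mul_of_pos_left (N ^ m + m + 1) (show 0 < i + j + k by omega)
    rw [Set.mem_Ioc] at hn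
    omega
  rcases eq_or_le_of_mul_add_mul_eq hi hj hk (mul_lt_pow_succ (i + j + k) m)
      (le_or_mem_of_mem_Ioc_pow hN (by omega) ha) (le_or_mem_of_mem_Ioc_pow hN (by omega) hb)
      (le_or_mem_of_mem_Ioc_pow hN (by omega) hc) h with hk | ⟨ha', hb', hc'⟩
  · exact hk
  · rcases (by omega : la = m + 1 ∨ lb = m + 1 ∨ lc = m + 1) with hl | hl | hl
    · exact absurd ha' (top hl ha).not_ge
    · exact absurd hb' (top hl hb).not_ge
    · exact absurd hc' (top hl hc).not_ge

/-- For positive integers `i, j, k`: every thick set `S ⊆ ℕ` contains a solution of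
`i·a + j·b = k·c` (with `a, b, c ∈ S`) if and only if `k ∈ {i, j, i+j}`. -/
theorem thick_solvable_iff (i j k : ℕ) (hi : 0 < i) (hj : 0 < j) (hk : 0 < k) :
    (∀ S : Set ℕ, ThickSet S → ∃ a ∈ S, ∃ b ∈ S, ∃ c ∈ S, i * a + j * b = k * c) ↔
      (k = i ∨ k = j ∨ k = i + j) := by
  constructor
  · intro H
    obtain ⟨a, ha, b, hb, c, hc, h⟩ := H _ (thickSet_sparseIntervals (2 * (i + j + k) + 1))
    exact eq_of_mem_sparseIntervals hi hj hk ha hb hc h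
  · rintro (rfl | rfl | rfl) S hS
    · exact hS.exists_mul_add_mul_eq_mul_left hi j
    · obtain ⟨b, hb, a, ha, c, hc, h⟩ := hS.exists_mul_add_mul_eq_mul_left hj i
      exact ⟨a, ha, b, hb, c, hc, by rw [← h, add_comm]⟩
    · obtain ⟨a, ha⟩ := hS.nonempty
      exact ⟨a, ha, a, ha, a, ha, by ring⟩
end
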